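/- Let $0 \le \theta < 1$, $\gamma > 0$ with $\theta + \gamma < 1$, and $T > 0$. Then there exists a constant $C > 0$ such that for all $\rho \ge 1$ and all $t \in (0, T]$, $\int_0^t e^{-\rho(t-r)} (t-r)^{-\theta} r^{-\gamma}\,dr \le C \rho^{\theta - 1 + \gamma}$. -/
import Mathlib


open MeasureTheory Set

private lemma rpow_le_exp_aux {x β : ℝ} (hx : 0 < x) (hβ0 : 0 ≤ β) (hβ1 : β ≤ 1) :
    x ^ β ≤ Real.exp x := by
  rcases le_total x 1 with h | h
  · exact (Real.rpow_le_one hx.le h hβ0).trans (Real.one_le_exp hx.le)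
  · calc x ^ β ≤ x ^ (1 : ℝ) := Real.rpow_le_rpow_of_exponent_le h hβ1
      _ = x := Real.rpow_one x
      _ ≤ Real.exp x := by linarith [Real.add_one_le_exp x]

private lemma beta_aux {γ t : ℝ} (hγ0 : 0 < γ) (hγ1 : γ < 1) (ht : 0 < t) :
    IntegrableOn (fun r => (t - r) ^ (γ - 1) * r ^ (-γ)) (Ioo 0 t) ∧
    ∫ r in Ioo 0 t, (t - r) ^ (γ - 1) * r ^ (-γ) ≤ 1 / (1 - γ) + 1 / γ := by
  have ht2 : (0:ℝ) < t / 2 := by linarith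
  have hmeas : Measurable (fun r : ℝ => (t - r) ^ (γ - 1) * r ^ (-γ)) := by fun_prop
  have hunion : Ioc (0:ℝ) (t/2) ∪ Ioo (t/2) t = Ioo 0 t :=
    Ioc_union_Ioo_eq_Ioo ht2.le (by linarith)
  have hdisj : Disjoint (Ioc (0:ℝ) (t/2)) (Ioo (t/2) t) := by
    apply Set.disjoint_left.mpr
    rintro x ⟨_, hx2⟩ ⟨hx3, _⟩; exact absurd hx3 (not_lt.mpr hx2)
  -- bounds on the two pieces
  have hb1 : ∀ r ∈ Ioc (0:ℝ) (t/2),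
      (t - r) ^ (γ - 1) * r ^ (-γ) ≤ (t/2) ^ (γ - 1) * r ^ (-γ) := by
    intro r hr
    have h2 : t / 2 ≤ t - r := by have := hr.2; linarith
    exact mul_le_mul_of_nonneg_right
      (Real.rpow_le_rpow_of_nonpos ht2 h2 (by linarith))
      (Real.rpow_nonneg hr.1.le _)
  have hb2 : ∀ r ∈ Ioo (t/2) t,
      (t - r) ^ (γ - 1) * r ^ (-γ) ≤ (t - r) ^ (γ - 1) * (t/2) ^ (-γ) := by
    intro r hr
    exact mul_le_mul_of_nonneg_left
      (Real.rpow_le_rpow_of_nonpos ht2 hr.1.le (by linarith))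
      (Real.rpow_nonneg (by linarith [hr.2] : (0:ℝ) ≤ t - r) _)
  -- nonnegativity on the pieces
  have hnn1 : ∀ r ∈ Ioc (0:ℝ) (t/2), 0 ≤ (t - r) ^ (γ - 1) * r ^ (-γ) := by
    intro r hr
    exact mul_nonneg (Real.rpow_nonneg (by have := hr.2; linarith) _)
      (Real.rpow_nonneg hr.1.le _)
  have hnn2 : ∀ r ∈ Ioo (t/2) t, 0 ≤ (t - r) ^ (γ - 1) * r ^ (-γ) := by
    intro r hr
    exact mul_nonneg (Real.rpow_nonneg (by linarith [hr.2]) _)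
      (Real.rpow_nonneg (by linarith [hr.1]) _)
  -- integrability of dominating functions
  have hint1 : IntegrableOn (fun r : ℝ => (t/2) ^ (γ - 1) * r ^ (-γ)) (Ioc 0 (t/2)) := by
    have h := (intervalIntegral.intervalIntegrable_rpow' (show (-1:ℝ) < -γ by linarith) (a := 0) (b := t/2))
    exact ((intervalIntegrable_iff_integrableOn_Ioc_of_le ht2.le).mp h).const_mul _
  have hint2 : IntegrableOn (fun r : ℝ => (t - r) ^ (γ - 1) * (t/2) ^ (-γ)) (Ioo (t/2) t) := by
    have h0 : IntervalIntegrable (fun x : ℝ => x ^ (γ - 1)) volume 0 (t/2) :=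
      intervalIntegral.intervalIntegrable_rpow' (by linarith)
    have h1 : IntervalIntegrable (fun x : ℝ => (t - x) ^ (γ - 1)) volume (t/2) t := by
      have h := h0.comp_sub_left t
      simpa [sub_self, show t - t/2 = t/2 by ring] using h.symm
    have h2 : IntegrableOn (fun x : ℝ => (t - x) ^ (γ - 1)) (Ioc (t/2) t) :=
      (intervalIntegrable_iff_integrableOn_Ioc_of_le (by linarith)).mp h1
    exact (h2.mono_set Ioo_subset_Ioc_self).mul_const _
  -- integrability of the beta integrand on each piece
  have hg1 : IntegrableOn (fun r => (t - r) ^ (γ - 1) * r ^ (-γ)) (Ioc 0 (t/2)) := by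
    refine hint1.mono' hmeas.aestronglyMeasurable ?_
    refine (ae_restrict_iff' measurableSet_Ioc).mpr (ae_of_all _ fun r hr => ?_)
    rw [Real.norm_eq_abs, abs_of_nonneg (hnn1 r hr)]
    exact hb1 r hr
  have hg2 : IntegrableOn (fun r => (t - r) ^ (γ - 1) * r ^ (-γ)) (Ioo (t/2) t) := by
    refine hint2.mono' hmeas.aestronglyMeasurable ?_
    refine (ae_restrict_iff' measurableSet_Ioo).mpr (ae_of_all _ fun r hr => ?_)
    rw [Real.norm_eq_abs, abs_of_nonneg (hnn2 r hr)]
    exact hb2 r hr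
  constructor
  · rw [← hunion]; exact hg1.union hg2
  -- value computations
  have hv1 : ∫ r in Ioc (0:ℝ) (t/2), (t/2) ^ (γ - 1) * r ^ (-γ) = 1 / (1 - γ) := by
    rw [integral_const_mul, ← intervalIntegral.integral_of_le ht2.le,
      integral_rpow (Or.inl (by linarith : (-1:ℝ) < -γ))]
    rw [Real.zero_rpow (ne_of_gt (by linarith : (0:ℝ) < -γ + 1)), sub_zero]
    rw [show (t/2) ^ (γ-1) * ((t/2) ^ (-γ+1) / (-γ+1)) =
      ((t/2) ^ (γ-1) * (t/2) ^ (-γ+1)) / (-γ+1) by ring, ← Real.rpow_add ht2,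
      show γ - 1 + (-γ + 1) = (0:ℝ) by ring, Real.rpow_zero, show -γ + 1 = 1 - γ by ring]
  have hv2 : ∫ r in Ioo (t/2) t, (t - r) ^ (γ - 1) * (t/2) ^ (-γ) = 1 / γ := by
    rw [← integral_Ioc_eq_integral_Ioo, ← intervalIntegral.integral_of_le (by linarith : t/2 ≤ t)]
    rw [intervalIntegral.integral_mul_const, intervalIntegral.integral_comp_sub_left
      (fun x : ℝ => x ^ (γ - 1)) t, sub_self, show t - t/2 = t/2 by ring,
      integral_rpow (Or.inl (by linarith : (-1:ℝ) < γ - 1))]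
    rw [show γ - 1 + 1 = γ by ring, Real.zero_rpow (ne_of_gt hγ0), sub_zero,
      div_mul_eq_mul_div, ← Real.rpow_add ht2, show γ + -γ = (0:ℝ) by ring, Real.rpow_zero]
  rw [← hunion, setIntegral_union hdisj measurableSet_Ioo hg1 hg2]
  have i1 : ∫ r in Ioc (0:ℝ) (t/2), (t - r) ^ (γ - 1) * r ^ (-γ) ≤ 1 / (1 - γ) := by
    rw [← hv1]; exact setIntegral_mono_on hg1 hint1 measurableSet_Ioc hb1
  have i2 : ∫ r in Ioo (t/2) t, (t - r) ^ (γ - 1) * r ^ (-γ) ≤ 1 / γ := by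
    rw [← hv2]; exact setIntegral_mono_on hg2 hint2 measurableSet_Ioo hb2
  linarith

theorem convolution_integral_bound (θ γ T : ℝ) (hθ0 : 0 ≤ θ) (hθ1 : θ < 1) (hγ : 0 < γ)
    (hθγ : θ + γ < 1) (hT : 0 < T) :
    ∃ C > 0, ∀ ρ : ℝ, 1 ≤ ρ → ∀ t : ℝ, 0 < t → t ≤ T →
      ∫ r in (0:ℝ)..t, Real.exp (-ρ * (t - r)) * (t - r) ^ (-θ) * r ^ (-γ)
        ≤ C * ρ ^ (θ - 1 + γ) := by
  have hγ1 : γ < 1 := by linarith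
  refine ⟨1 / (1 - γ) + 1 / γ, add_pos (div_pos one_pos (by linarith)) (div_pos one_pos hγ), ?_⟩
  intro ρ hρ t ht htT
  have hρ0 : (0:ℝ) < ρ := by linarith
  obtain ⟨hInt, hVal⟩ := beta_aux hγ hγ1 ht
  set β := 1 - θ - γ with hβ
  have hβ0 : 0 ≤ β := by rw [hβ]; linarith
  have hβ1 : β ≤ 1 := by rw [hβ]; linarith
  have key : ∀ r ∈ Ioo (0:ℝ) t,
      Real.exp (-ρ * (t - r)) * (t - r) ^ (-θ) * r ^ (-γ)
        ≤ ρ ^ (θ - 1 + γ) * ((t - r) ^ (γ - 1) * r ^ (-γ)) := by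
    intro r hr
    have h1 : 0 < t - r := by linarith [hr.2]
    have h2 : 0 < r := hr.1
    have hx : 0 < ρ * (t - r) := mul_pos hρ0 h1
    have hexp : Real.exp (-ρ * (t - r)) ≤ (ρ * (t - r)) ^ (-β) := by
      rw [Real.rpow_neg hx.le, show -ρ * (t - r) = -(ρ * (t - r)) by ring, Real.exp_neg]
      exact inv_anti₀ (Real.rpow_pos_of_pos hx β) (rpow_le_exp_aux hx hβ0 hβ1)
    have e1 : (t - r) ^ (-β) * (t - r) ^ (-θ) = (t - r) ^ (γ - 1) := by
      rw [← Real.rpow_add h1]; congr 1; rw [hβ]; ring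
    have e2 : ρ ^ (-β) = ρ ^ (θ - 1 + γ) := by congr 1; rw [hβ]; ring
    calc Real.exp (-ρ * (t - r)) * (t - r) ^ (-θ) * r ^ (-γ)
        ≤ (ρ * (t - r)) ^ (-β) * (t - r) ^ (-θ) * r ^ (-γ) :=
          mul_le_mul_of_nonneg_right (mul_le_mul_of_nonneg_right hexp
            (Real.rpow_nonneg h1.le _)) (Real.rpow_nonneg h2.le _)
      _ = ρ ^ (-β) * (((t - r) ^ (-β) * (t - r) ^ (-θ)) * r ^ (-γ)) := by
          rw [Real.mul_rpow hρ0.le h1.le]; ring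
      _ = ρ ^ (θ - 1 + γ) * ((t - r) ^ (γ - 1) * r ^ (-γ)) := by rw [e1, e2]
  have hFmeas : Measurable (fun r : ℝ =>
      Real.exp (-ρ * (t - r)) * (t - r) ^ (-θ) * r ^ (-γ)) := by fun_prop
  have hFint : IntegrableOn (fun r : ℝ =>
      Real.exp (-ρ * (t - r)) * (t - r) ^ (-θ) * r ^ (-γ)) (Ioo 0 t) := by
    refine (hInt.const_mul (ρ ^ (θ - 1 + γ))).mono' hFmeas.aestronglyMeasurable ?_
    refine (ae_restrict_iff' measurableSet_Ioo).mpr (ae_of_all _ fun r hr => ?_)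
    have h1 : (0:ℝ) ≤ t - r := by linarith [hr.2]
    rw [Real.norm_eq_abs, abs_of_nonneg (mul_nonneg (mul_nonneg (Real.exp_pos _).le
      (Real.rpow_nonneg h1 _)) (Real.rpow_nonneg hr.1.le _))]
    exact key r hr
  rw [intervalIntegral.integral_of_le ht.le, integral_Ioc_eq_integral_Ioo]
  calc ∫ r in Ioo (0:ℝ) t, Real.exp (-ρ * (t - r)) * (t - r) ^ (-θ) * r ^ (-γ)
      ≤ ∫ r in Ioo (0:ℝ) t, ρ ^ (θ - 1 + γ) * ((t - r) ^ (γ - 1) * r ^ (-γ)) :=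
        setIntegral_mono_on hFint (hInt.const_mul _) measurableSet_Ioo key
    _ = ρ ^ (θ - 1 + γ) * ∫ r in Ioo (0:ℝ) t, (t - r) ^ (γ - 1) * r ^ (-γ) :=
        integral_const_mul _ _
    _ ≤ ρ ^ (θ - 1 + γ) * (1 / (1 - γ) + 1 / γ) :=
        mul_le_mul_of_nonneg_left hVal (Real.rpow_nonneg hρ0.le _)
    _ = (1 / (1 - γ) + 1 / γ) * ρ ^ (θ - 1 + γ) := mul_comm _ _
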